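/- Let η > 0, k ∈ ℕ∪{0} and 0 < t ≤ η. Then: (1) if α < 1, ∫_t^η ds / w^{sl}_{k,α}(s) = (1/(1−α))·( A^1_k(η/t)^{1−α} − a^{1−α} ); (2) if α = 1, ∫_t^η ds / w^{sl}_{k,1}(s) = A^1_{k+1}(η/t) − a; (3) if α > 1, ∫_0^t ds / w^{sl}_{k,α}(s) = (1/(α−1))·A^1_k(η/t)^{1−α}. -/

import Mathlib

/-!
Write `A_k(s) = A^1_k(η/s)`. From `φ' = 1/F̃`, `F'(u) = 1/u` and `F̃(ar) = ar B^0(r)`, the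
chain rule gives `A_k'(s) = -1 / (s B^0(η/s) ∏_{j<k} A_j(s))`, i.e. `1/w_{k,α} = -A_k^{-α} A_k'`.
So `A_k^{1-α}/(α-1)` is a primitive of `1/w_{k,α}` for `α ≠ 1`, and `-A_{k+1}` one of `1/w_{k,1}`
(since `A_{k+1}' = A_k'/A_k`); moreover `A_k(η) = a`. For `α > 1` the integral from `0` uses
`A_k(s) → ∞` as `s → 0⁺`, which follows from `φ(u) - a = a (φ(F u) - a)`, the substitution
`t = F(x)` combined with `F̃(F u) = a F̃(u)/u`.

The continuity of `F̃` behind `φ' = 1/F̃` comes from `F̃ = a exp (∑_{k≥1} (F^k - a))`, a series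
dominated by a geometric one because `F u - a = log (u/a) ≤ (u - a)/a`.
-/
open Real MeasureTheory Filter Topology Set

/-- `F(u) = a - log a + log u`. -/
noncomputable def Fa (a : ℝ) : ℝ → ℝ := fun u => a - Real.log a + Real.log u

/-- `F̃(u) = a · ∏_{k=0}^∞ (F^k(u)/a)`. -/
noncomputable def Ftilde (a : ℝ) (u : ℝ) : ℝ := a * ∏' k : ℕ, ((Fa a)^[k] u / a)

/-- `φ(u) = a + ∫_a^u dt / F̃(t)`. -/
noncomputable def phiFun (a : ℝ) (u : ℝ) : ℝ := a + ∫ t in a..u, 1 / Ftilde a t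

/-- The super-logarithm: `L(r) = φ(ar) - a` for `r ≥ 1` and `L(r) = -L(1/r)` for `0 < r < 1`. -/
noncomputable def superLog (a : ℝ) (r : ℝ) : ℝ :=
  if 1 ≤ r then phiFun a (a * r) - a else -(phiFun a (a * (1 / r)) - a)

/-- `A^0_k(r) = F^k(ar)`. -/
noncomputable def A0 (a : ℝ) (k : ℕ) (r : ℝ) : ℝ := (Fa a)^[k] (a * r)

/-- `A^1_k(r) = F^k(φ(ar))` (with `A^1_0(r) = φ(ar)`). -/
noncomputable def A1 (a : ℝ) (k : ℕ) (r : ℝ) : ℝ := (Fa a)^[k] (phiFun a (a * r))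

/-- `B^0(r) = F̃(ar)/(ar)`. -/
noncomputable def B0 (a : ℝ) (r : ℝ) : ℝ := Ftilde a (a * r) / (a * r)

/-- `w^{sl}_{k,α}(t) = t · B^0(η/t) · (∏_{j=0}^{k-1} A^1_j(η/t)) · A^1_k(η/t)^α`. -/
noncomputable def wsl (a : ℝ) (k : ℕ) (α : ℝ) (η : ℝ) (t : ℝ) : ℝ :=
  t * B0 a (η / t) * (∏ j ∈ Finset.range k, A1 a j (η / t)) * (A1 a k (η / t)) ^ α

theorem continuousOn_Ici_of_forall_Icc {α β : Type*} [TopologicalSpace α] [LinearOrder α]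
    [OrderTopology α] [NoMaxOrder α] [TopologicalSpace β] {f : α → β} {a : α}
    (h : ∀ b, ContinuousOn f (Icc a b)) : ContinuousOn f (Ici a) := by
  refine continuousOn_of_locally_continuousOn fun x _ => ?_
  obtain ⟨b, hxb⟩ := exists_gt x
  exact ⟨Iio b, isOpen_Iio, hxb, (h b).mono fun y hy => ⟨hy.1, hy.2.le⟩⟩

namespace intervalIntegral

variable {f f' : ℝ → ℝ} {a b : ℝ}

theorem integral_eq_sub_of_hasDerivAt_of_nonneg (hab : a ≤ b) (hcont : ContinuousOn f (Icc a b))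
    (hderiv : ∀ x ∈ Ioo a b, HasDerivAt f (f' x) x) (hf' : ∀ x ∈ Ioo a b, 0 ≤ f' x) :
    ∫ y in a..b, f' y = f b - f a :=
  integral_eq_sub_of_hasDerivAt_of_le hab hcont hderiv <|
    (intervalIntegrable_iff_integrableOn_Ioc_of_le hab).2 <|
      integrableOn_deriv_of_nonneg hcont hderiv hf'

theorem integral_eq_sub_of_hasDerivAt_of_nonneg_of_tendsto (hab : a < b) {fa : ℝ}
    (hcont : ContinuousOn f (Ioc a b)) (hderiv : ∀ x ∈ Ioo a b, HasDerivAt f (f' x) x)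
    (hf' : ∀ x ∈ Ioo a b, 0 ≤ f' x) (ha : Tendsto f (𝓝[>] a) (𝓝 fa)) :
    ∫ y in a..b, f' y = f b - fa := by
  classical
  have hupdate : ∀ y ≠ a, Function.update f a fa y = f y := fun y hy =>
    Function.update_of_ne hy _ _
  have hcont' : ContinuousOn (Function.update f a fa) (Icc a b) := by
    rw [continuousOn_update_iff, Icc_sdiff_left]
    exact ⟨hcont, fun _ => ha.mono_left (nhdsWithin_mono _ Ioc_subset_Ioi_self)⟩
  have hderiv' : ∀ x ∈ Ioo a b, HasDerivAt (Function.update f a fa) (f' x) x := fun x hx =>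
    (hderiv x hx).congr_of_eventuallyEq <| by
      filter_upwards [Ioi_mem_nhds hx.1] with y hy using hupdate y hy.ne'
  simpa [hupdate b hab.ne'] using
    integral_eq_sub_of_hasDerivAt_of_nonneg hab.le hcont' hderiv' hf'

end intervalIntegral

section Fa

variable {a u : ℝ}

theorem Fa_sub_self (a u : ℝ) : Fa a u - a = log u - log a := by
  simp only [Fa]; ring

theorem Fa_self (a : ℝ) : Fa a a = a := by
  simp [Fa]

theorem iterate_Fa_self (a : ℝ) (k : ℕ) : (Fa a)^[k] a = a :=
  Function.iterate_fixed (Fa_self a) k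

theorem div_eq_exp_Fa_sub_self (ha : 0 < a) (hu : 0 < u) : u / a = exp (Fa a u - a) := by
  rw [Fa_sub_self, exp_sub, exp_log hu, exp_log ha]

theorem le_Fa (ha : 0 < a) (hu : a ≤ u) : a ≤ Fa a u := by
  linarith [Fa_sub_self a u, log_le_log ha hu]

theorem Fa_sub_self_le (ha : 0 < a) (hu : 0 < u) : Fa a u - a ≤ (u - a) / a := by
  calc Fa a u - a = log (u / a) := by rw [log_div hu.ne' ha.ne', Fa_sub_self]
    _ ≤ u / a - 1 := log_le_sub_one_of_pos (div_pos hu ha)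
    _ = (u - a) / a := by rw [sub_div, div_self ha.ne']

theorem le_iterate_Fa (ha : 0 < a) (hu : a ≤ u) (k : ℕ) : a ≤ (Fa a)^[k] u := by
  induction k with
  | zero => exact hu
  | succ k ih => rw [Function.iterate_succ_apply']; exact le_Fa ha ih

theorem iterate_Fa_sub_self_le {M : ℝ} (ha : 0 < a) (hu : a ≤ u) (huM : u ≤ M) (k : ℕ) :
    (Fa a)^[k] u - a ≤ (M - a) * a⁻¹ ^ k := by
  induction k with
  | zero => simpa using huM
  | succ k ih =>
    rw [Function.iterate_succ_apply', pow_succ, ← mul_assoc, ← div_eq_mul_inv]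
    calc Fa a ((Fa a)^[k] u) - a ≤ ((Fa a)^[k] u - a) / a :=
          Fa_sub_self_le ha (ha.trans_le (le_iterate_Fa ha hu k))
      _ ≤ (M - a) * a⁻¹ ^ k / a := by gcongr

theorem continuousOn_iterate_Fa (ha : 0 < a) (k : ℕ) : ContinuousOn (Fa a)^[k] (Ici a) := by
  induction k with
  | zero => exact continuousOn_id
  | succ k ih =>
    rw [Function.iterate_succ']
    refine ContinuousOn.comp (t := Ici a) ?_ ih fun u hu => le_iterate_Fa ha hu k
    exact continuousOn_const.add <| continuousOn_log.mono fun v hv => (ha.trans_le hv).ne'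

theorem tendsto_iterate_Fa_atTop (a : ℝ) (k : ℕ) : Tendsto (Fa a)^[k] atTop atTop := by
  induction k with
  | zero => exact tendsto_id
  | succ k ih =>
    rw [Function.iterate_succ']
    exact (tendsto_atTop_add_const_left _ _ tendsto_log_atTop).comp ih

end Fa

section Ftilde

variable {a u : ℝ}

noncomputable def FtildeExponent (a u : ℝ) : ℝ := ∑' k : ℕ, ((Fa a)^[k + 1] u - a)

theorem summable_geometric_inv_succ (ha : 1 < a) (c : ℝ) :
    Summable fun k : ℕ => c * a⁻¹ ^ (k + 1) :=
  (summable_nat_add_iff 1).2 <| (summable_geometric_of_lt_one (by positivity)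
    (inv_lt_one_of_one_lt₀ ha)).mul_left c

theorem summable_iterate_Fa_sub_self (ha : 1 < a) (hu : a ≤ u) :
    Summable fun k : ℕ => (Fa a)^[k + 1] u - a :=
  (summable_geometric_inv_succ ha (u - a)).of_nonneg_of_le
    (fun k => sub_nonneg.2 (le_iterate_Fa (by linarith) hu _))
    (fun k => iterate_Fa_sub_self_le (by linarith) hu le_rfl _)

theorem Ftilde_eq_mul_exp (ha : 1 < a) (hu : a ≤ u) :
    Ftilde a u = a * exp (FtildeExponent a u) := by
  have ha0 : 0 < a := by linarith
  have hfactor : ∀ k, (Fa a)^[k] u / a = exp ((Fa a)^[k + 1] u - a) := fun k => by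
    rw [Function.iterate_succ_apply',
      div_eq_exp_Fa_sub_self ha0 (ha0.trans_le (le_iterate_Fa ha0 hu k))]
  rw [Ftilde, funext hfactor, ← Function.comp_def rexp,
    (summable_iterate_Fa_sub_self ha hu).hasSum.rexp.tprod_eq, FtildeExponent]

theorem FtildeExponent_Fa (ha : 1 < a) (hu : a ≤ u) :
    FtildeExponent a (Fa a u) = FtildeExponent a u - (Fa a u - a) := by
  rw [FtildeExponent, FtildeExponent, (summable_iterate_Fa_sub_self ha hu).tsum_eq_zero_add]
  simp only [Function.iterate_succ_apply, zero_add, Function.iterate_zero_apply]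
  ring

theorem le_Ftilde (ha : 1 < a) (hu : a ≤ u) : u ≤ Ftilde a u := by
  have ha0 : 0 < a := by linarith
  have hfirst : Fa a u - a ≤ FtildeExponent a u := by
    simpa only [zero_add, Function.iterate_one, FtildeExponent] using
      (summable_iterate_Fa_sub_self ha hu).le_tsum 0
        fun k _ => sub_nonneg.2 (le_iterate_Fa ha0 hu _)
  calc u = a * exp (Fa a u - a) := by
        rw [← div_eq_exp_Fa_sub_self ha0 (ha0.trans_le hu), mul_div_cancel₀ _ ha0.ne']
    _ ≤ Ftilde a u := by rw [Ftilde_eq_mul_exp ha hu]; gcongr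

theorem Ftilde_pos (ha : 1 < a) (hu : a ≤ u) : 0 < Ftilde a u :=
  (by linarith : (0 : ℝ) < u).trans_le (le_Ftilde ha hu)

theorem Ftilde_Fa (ha : 1 < a) (hu : a ≤ u) : Ftilde a (Fa a u) = a * Ftilde a u / u := by
  have ha0 : 0 < a := by linarith
  have hu0 : 0 < u := ha0.trans_le hu
  rw [Ftilde_eq_mul_exp ha (le_Fa ha0 hu), FtildeExponent_Fa ha hu, exp_sub,
    ← div_eq_exp_Fa_sub_self ha0 hu0, Ftilde_eq_mul_exp ha hu]
  field_simp

theorem continuousOn_FtildeExponent (ha : 1 < a) : ContinuousOn (FtildeExponent a) (Ici a) := by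
  have ha0 : 0 < a := by linarith
  refine continuousOn_Ici_of_forall_Icc fun M => ?_
  refine continuousOn_tsum (fun k => ((continuousOn_iterate_Fa ha0 _).sub continuousOn_const).mono
    Icc_subset_Ici_self) (summable_geometric_inv_succ ha (M - a)) fun k v hv => ?_
  rw [norm_of_nonneg (sub_nonneg.2 (le_iterate_Fa ha0 hv.1 _))]
  exact iterate_Fa_sub_self_le ha0 hv.1 hv.2 _

theorem continuousOn_Ftilde (ha : 1 < a) : ContinuousOn (Ftilde a) (Ici a) :=
  (continuousOn_const.mul (continuousOn_FtildeExponent ha).rexp).congr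
    fun _ hu => Ftilde_eq_mul_exp ha hu

theorem continuousOn_one_div_Ftilde (ha : 1 < a) :
    ContinuousOn (fun t => 1 / Ftilde a t) (Ici a) :=
  continuousOn_const.div (continuousOn_Ftilde ha) fun _ hu => (Ftilde_pos ha hu).ne'

end Ftilde

section phiFun

variable {a u v : ℝ}

theorem intervalIntegrable_one_div_Ftilde (ha : 1 < a) (hu : a ≤ u) (hv : a ≤ v) :
    IntervalIntegrable (fun t => 1 / Ftilde a t) volume u v :=
  ((continuousOn_one_div_Ftilde ha).mono (ordConnected_Ici.uIcc_subset hu hv)).intervalIntegrable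

theorem phiFun_self (a : ℝ) : phiFun a a = a := by
  simp [phiFun]

theorem phiFun_sub_phiFun (ha : 1 < a) (hu : a ≤ u) (hv : a ≤ v) :
    phiFun a v - phiFun a u = ∫ t in u..v, 1 / Ftilde a t := by
  rw [phiFun, phiFun, add_sub_add_left_eq_sub, intervalIntegral.integral_interval_sub_left
    (intervalIntegrable_one_div_Ftilde ha le_rfl hv)
    (intervalIntegrable_one_div_Ftilde ha le_rfl hu)]

theorem phiFun_sub_self (a u : ℝ) : phiFun a u - a = ∫ t in a..u, 1 / Ftilde a t := by
  rw [phiFun, add_sub_cancel_left]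

theorem phiFun_lt_phiFun (ha : 1 < a) (hu : a ≤ u) (huv : u < v) :
    phiFun a u < phiFun a v := by
  rw [← sub_pos, phiFun_sub_phiFun ha hu (hu.trans huv.le)]
  exact intervalIntegral.intervalIntegral_pos_of_pos_on
    (intervalIntegrable_one_div_Ftilde ha hu (hu.trans huv.le))
    (fun t ht => one_div_pos.2 (Ftilde_pos ha (hu.trans ht.1.le))) huv

theorem phiFun_le_phiFun (ha : 1 < a) (hu : a ≤ u) (huv : u ≤ v) :
    phiFun a u ≤ phiFun a v := by
  rcases huv.eq_or_lt with rfl | huv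
  · rfl
  · exact (phiFun_lt_phiFun ha hu huv).le

theorem le_phiFun (ha : 1 < a) (hu : a ≤ u) : a ≤ phiFun a u := by
  simpa only [phiFun_self] using phiFun_le_phiFun ha le_rfl hu

theorem continuousOn_phiFun (ha : 1 < a) : ContinuousOn (phiFun a) (Ici a) := by
  refine continuousOn_Ici_of_forall_Icc fun M => ?_
  rcases le_total a M with haM | hMa
  · rw [← uIcc_of_le haM]
    exact continuousOn_const.add <| intervalIntegral.continuousOn_primitive_interval'
      (intervalIntegrable_one_div_Ftilde ha le_rfl haM) left_mem_uIcc
  · exact (subsingleton_Icc_of_ge hMa).continuousOn _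

theorem hasDerivAt_phiFun (ha : 1 < a) (hu : a < u) :
    HasDerivAt (phiFun a) (1 / Ftilde a u) u := by
  have hnhds : Ici a ∈ 𝓝 u := Ici_mem_nhds hu
  exact (intervalIntegral.integral_hasDerivAt_right
    (intervalIntegrable_one_div_Ftilde ha le_rfl hu.le)
    (((continuousOn_one_div_Ftilde ha).mono Ioi_subset_Ici_self).stronglyMeasurableAtFilter
      isOpen_Ioi u hu)
    ((continuousOn_one_div_Ftilde ha).continuousAt hnhds)).const_add a

theorem phiFun_sub_self_eq_mul (ha : 1 < a) (hu : a ≤ u) :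
    phiFun a u - a = a * (phiFun a (Fa a u) - a) := by
  have ha0 : 0 < a := by linarith
  have hpos : ∀ t ∈ uIcc a u, 0 < t := fun t ht => ha0.trans_le (uIcc_of_le hu ▸ ht).1
  have hsubst := intervalIntegral.integral_comp_mul_deriv' (f := Fa a) (f' := fun t => t⁻¹)
    (g := fun t => 1 / Ftilde a t)
    (fun t ht => (hasDerivAt_log (hpos t ht).ne').const_add _)
    (continuousOn_inv₀.mono fun t ht => (hpos t ht).ne')
    ((continuousOn_one_div_Ftilde ha).mono <| by
      rintro _ ⟨t, ht, rfl⟩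
      exact le_Fa ha0 (uIcc_of_le hu ▸ ht).1)
  have hintegrand : ∀ t ∈ uIcc a u,
      (fun t => 1 / Ftilde a t) (Fa a t) * t⁻¹ = a⁻¹ * (1 / Ftilde a t) := fun t ht => by
    have ht := (uIcc_of_le hu ▸ ht).1
    have := (Ftilde_pos ha ht).ne'
    have := (ha0.trans_le ht).ne'
    simp only [Ftilde_Fa ha ht]
    field_simp
  rw [Function.comp_def, intervalIntegral.integral_congr hintegrand,
    intervalIntegral.integral_const_mul, Fa_self, ← phiFun_sub_self, ← phiFun_sub_self]
    at hsubst
  rw [← hsubst]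
  field_simp

theorem phiFun_sub_self_eq_pow_mul (ha : 1 < a) (hu : a ≤ u) (n : ℕ) :
    phiFun a u - a = a ^ n * (phiFun a ((Fa a)^[n] u) - a) := by
  induction n with
  | zero => simp
  | succ n ih =>
    rw [ih, phiFun_sub_self_eq_mul ha (le_iterate_Fa (by linarith) hu n),
      ← Function.iterate_succ_apply' (Fa a), pow_succ, mul_assoc]

/-- By `phiFun_sub_self_eq_pow_mul`, `φ u - a ≥ a ^ n (φ (a + 1) - a)` once `F^[n] u ≥ a + 1`. -/
theorem tendsto_phiFun_atTop (ha : 1 < a) : Tendsto (phiFun a) atTop atTop := by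
  have hc : 0 < phiFun a (a + 1) - a := by
    rw [sub_pos]; simpa [phiFun_self] using phiFun_lt_phiFun ha le_rfl (lt_add_one a)
  refine tendsto_atTop.2 fun M => ?_
  obtain ⟨n, hn⟩ := (((tendsto_pow_atTop_atTop_of_one_lt ha).atTop_mul_const hc).eventually_ge_atTop
      (M - a)).exists
  filter_upwards [(tendsto_iterate_Fa_atTop a n).eventually_ge_atTop (a + 1),
    eventually_ge_atTop a] with u hn_u hu
  have := phiFun_le_phiFun ha (by linarith) hn_u
  have := phiFun_sub_self_eq_pow_mul ha hu n
  nlinarith [pow_pos (zero_lt_one.trans ha) n]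

end phiFun

section A1

variable {a r : ℝ}

theorem A1_succ (a : ℝ) (k : ℕ) (r : ℝ) : A1 a (k + 1) r = Fa a (A1 a k r) :=
  Function.iterate_succ_apply' _ _ _

theorem A1_one (a : ℝ) (k : ℕ) : A1 a k 1 = a := by
  rw [A1, mul_one, phiFun_self, iterate_Fa_self]

theorem le_A1 (ha : 1 < a) (hr : 1 ≤ r) (k : ℕ) : a ≤ A1 a k r :=
  le_iterate_Fa (zero_lt_one.trans ha)
    (le_phiFun ha (le_mul_of_one_le_right (zero_le_one.trans ha.le) hr)) k

theorem A1_pos (ha : 1 < a) (hr : 1 ≤ r) (k : ℕ) : 0 < A1 a k r :=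
  (zero_lt_one.trans ha).trans_le (le_A1 ha hr k)

theorem continuousOn_A1 (ha : 1 < a) (k : ℕ) : ContinuousOn (A1 a k) (Ici 1) :=
  (continuousOn_iterate_Fa (by linarith) k).comp
    ((continuousOn_phiFun ha).comp (continuousOn_const.mul continuousOn_id)
      fun _ hr => le_mul_of_one_le_right (zero_le_one.trans ha.le) hr)
    fun _ hr => le_phiFun ha (le_mul_of_one_le_right (zero_le_one.trans ha.le) hr)

theorem hasDerivAt_A1 (ha : 1 < a) (hr : 1 < r) (k : ℕ) :
    HasDerivAt (A1 a k) (a / (Ftilde a (a * r) * ∏ j ∈ Finset.range k, A1 a j r)) r := by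
  induction k with
  | zero =>
    have har : a < a * r := lt_mul_of_one_lt_right (by linarith) hr
    refine ((hasDerivAt_phiFun ha har).comp r ((hasDerivAt_id r).const_mul a)).congr_deriv ?_
    simp [div_eq_mul_inv, mul_comm]
  | succ k ih =>
    have hA := A1_pos ha hr.le k
    have hFa : HasDerivAt (Fa a) (A1 a k r)⁻¹ (A1 a k r) :=
      (hasDerivAt_log hA.ne').const_add (a - log a)
    rw [show A1 a (k + 1) = Fa a ∘ A1 a k from funext (A1_succ a k), Finset.prod_range_succ]
    refine (hFa.comp r ih).congr_deriv ?_
    field_simp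

theorem tendsto_A1_atTop (ha : 1 < a) (k : ℕ) : Tendsto (A1 a k) atTop atTop :=
  (tendsto_iterate_Fa_atTop a k).comp <|
    (tendsto_phiFun_atTop ha).comp (tendsto_id.const_mul_atTop (by linarith))

end A1

section wsl

variable {a η s : ℝ}

theorem B0_pos (ha : 1 < a) {r : ℝ} (hr : 1 ≤ r) : 0 < B0 a r :=
  div_pos (Ftilde_pos ha (le_mul_of_one_le_right (zero_le_one.trans ha.le) hr)) (by nlinarith)

theorem wsl_pos (ha : 1 < a) (hs : 0 < s) (hsη : s ≤ η) (k : ℕ) (α : ℝ) :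
    0 < wsl a k α η s := by
  have hr : 1 ≤ η / s := (one_le_div hs).2 hsη
  have hB := B0_pos ha hr
  have hP := Finset.prod_pos fun j (_ : j ∈ Finset.range k) => A1_pos ha hr j
  have hA := rpow_pos_of_pos (A1_pos ha hr k) α
  unfold wsl
  positivity

theorem continuousOn_A1_div (ha : 1 < a) (k : ℕ) :
    ContinuousOn (fun s => A1 a k (η / s)) (Ioc 0 η) :=
  (continuousOn_A1 ha k).comp (continuousOn_const.div continuousOn_id fun _ hs => hs.1.ne')
    fun _ hs => (one_le_div hs.1).2 hs.2

theorem continuousOn_A1_div_rpow (ha : 1 < a) (k : ℕ) (α : ℝ) :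
    ContinuousOn (fun s => A1 a k (η / s) ^ (1 - α) / (α - 1)) (Ioc 0 η) :=
  ((continuousOn_A1_div ha k).rpow_const fun _ hs =>
    Or.inl (A1_pos ha ((one_le_div hs.1).2 hs.2) k).ne').div_const _

theorem hasDerivAt_A1_div (ha : 1 < a) (hs : 0 < s) (hsη : s < η) (k : ℕ) :
    HasDerivAt (fun s => A1 a k (η / s))
      (-1 / (s * B0 a (η / s) * ∏ j ∈ Finset.range k, A1 a j (η / s))) s := by
  have hr : 1 < η / s := (one_lt_div hs).2 hsη
  have hF := (Ftilde_pos ha (le_mul_of_one_le_right (zero_le_one.trans ha.le) hr.le)).ne'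
  have hP := (Finset.prod_pos fun j (_ : j ∈ Finset.range k) => A1_pos ha hr.le j).ne'
  have := hs.ne'
  have : a ≠ 0 := by linarith
  have : η ≠ 0 := by linarith
  refine ((hasDerivAt_A1 ha hr k).comp s ((hasDerivAt_inv hs.ne').const_mul η)).congr_deriv ?_
  rw [B0]
  field_simp

theorem hasDerivAt_A1_div_rpow (ha : 1 < a) (hs : 0 < s) (hsη : s < η) (k : ℕ) {α : ℝ}
    (hα : α ≠ 1) :
    HasDerivAt (fun s => A1 a k (η / s) ^ (1 - α) / (α - 1)) (1 / wsl a k α η s) s := by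
  have hr : 1 ≤ η / s := ((one_lt_div hs).2 hsη).le
  have hA := A1_pos ha hr k
  have hB := (B0_pos ha hr).ne'
  have hP := (Finset.prod_pos fun j (_ : j ∈ Finset.range k) => A1_pos ha hr j).ne'
  have := (rpow_pos_of_pos hA α).ne'
  have := hs.ne'
  have : α - 1 ≠ 0 := sub_ne_zero.2 hα
  refine (((hasDerivAt_A1_div ha hs hsη k).rpow_const (Or.inl hA.ne')).div_const _).congr_deriv ?_
  rw [show 1 - α - 1 = -α by ring, rpow_neg hA.le, wsl]
  field_simp
  ring

theorem hasDerivAt_neg_A1_succ_div (ha : 1 < a) (hs : 0 < s) (hsη : s < η) (k : ℕ) :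
    HasDerivAt (fun s => -A1 a (k + 1) (η / s)) (1 / wsl a k 1 η s) s := by
  refine (hasDerivAt_A1_div ha hs hsη (k + 1)).neg.congr_deriv ?_
  rw [wsl, rpow_one, Finset.prod_range_succ, neg_div, neg_neg, mul_assoc (s * _)]

theorem tendsto_A1_div_nhdsGT_zero (ha : 1 < a) (hη : 0 < η) (k : ℕ) :
    Tendsto (fun s => A1 a k (η / s)) (𝓝[>] 0) atTop :=
  (tendsto_A1_atTop ha k).comp (tendsto_inv_nhdsGT_zero.const_mul_atTop hη)

theorem tendsto_A1_div_rpow_nhdsGT_zero (ha : 1 < a) (hη : 0 < η) (k : ℕ) {α : ℝ}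
    (hα : 1 < α) :
    Tendsto (fun s => A1 a k (η / s) ^ (1 - α) / (α - 1)) (𝓝[>] 0) (𝓝 0) := by
  have := ((tendsto_rpow_neg_atTop (sub_pos.2 hα)).comp
    (tendsto_A1_div_nhdsGT_zero ha hη k)).div_const (α - 1)
  simpa only [zero_div, Function.comp_def, neg_sub] using this

end wsl

/-- Explicit antiderivative identities for `1/w^{sl}_{k,α}`: for `η > 0`, `k ∈ ℕ∪{0}` and
`0 < t ≤ η`, (1) if `α < 1` then `∫_t^η ds/w^{sl}_{k,α}(s) = (A^1_k(η/t)^{1−α} − a^{1−α})/(1−α)`;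
(2) `∫_t^η ds/w^{sl}_{k,1}(s) = A^1_{k+1}(η/t) − a`;
(3) if `α > 1` then `∫_0^t ds/w^{sl}_{k,α}(s) = A^1_k(η/t)^{1−α}/(α−1)`. -/
theorem stmt16 (a : ℝ) (ha : 1 < a) (η : ℝ) (hη : 0 < η) (k : ℕ) (α : ℝ)
    (t : ℝ) (ht : 0 < t) (htη : t ≤ η) :
    (α < 1 → ∫ s in t..η, 1 / wsl a k α η s =
      (1 / (1 - α)) * ((A1 a k (η / t)) ^ (1 - α) - a ^ (1 - α))) ∧
    (∫ s in t..η, 1 / wsl a k 1 η s = A1 a (k + 1) (η / t) - a) ∧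
    (1 < α → ∫ s in (0 : ℝ)..t, 1 / wsl a k α η s =
      (1 / (α - 1)) * (A1 a k (η / t)) ^ (1 - α)) := by
  have hA_self : ∀ j, A1 a j (η / η) = a := fun j => by rw [div_self hη.ne', A1_one]
  have hw : ∀ β, ∀ s ∈ Ioo 0 η, 0 ≤ 1 / wsl a k β η s :=
    fun β s hs => (one_div_pos.2 (wsl_pos ha hs.1 hs.2.le k β)).le
  have hIcc : Icc t η ⊆ Ioc 0 η := Icc_subset_Ioc_iff htη |>.2 ⟨ht, le_rfl⟩
  have hIoo : Ioo t η ⊆ Ioo 0 η := Ioo_subset_Ioo_left ht.le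
  refine ⟨fun hα => ?_, ?_, fun hα => ?_⟩
  · rw [intervalIntegral.integral_eq_sub_of_hasDerivAt_of_nonneg htη
      ((continuousOn_A1_div_rpow ha k α).mono hIcc)
      (fun s hs => hasDerivAt_A1_div_rpow ha (hIoo hs).1 hs.2 k hα.ne)
      (fun s hs => hw α s (hIoo hs)), hA_self]
    field_simp [sub_ne_zero.2 hα.ne, sub_ne_zero.2 hα.ne']
    ring
  · rw [intervalIntegral.integral_eq_sub_of_hasDerivAt_of_nonneg htη
      ((continuousOn_A1_div ha (k + 1)).neg.mono hIcc)
      (fun s hs => hasDerivAt_neg_A1_succ_div ha (hIoo hs).1 hs.2 k)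
      (fun s hs => hw 1 s (hIoo hs)), Pi.neg_apply, Pi.neg_apply, hA_self]
    ring
  · have hIoo' : Ioo 0 t ⊆ Ioo 0 η := Ioo_subset_Ioo_right htη
    rw [intervalIntegral.integral_eq_sub_of_hasDerivAt_of_nonneg_of_tendsto ht
      ((continuousOn_A1_div_rpow ha k α).mono (Ioc_subset_Ioc_right htη))
      (fun s hs => hasDerivAt_A1_div_rpow ha hs.1 (hIoo' hs).2 k hα.ne')
      (fun s hs => hw α s (hIoo' hs)) (tendsto_A1_div_rpow_nhdsGT_zero ha hη k hα)]
    ring
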